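/- A Shuffler strategy S is a maximizing Shuffler strategy (i.e., F(d,S) = max_{S'} F(d,S') for all n-vectors d) if and only if S(d) is uniform on [n] for every fully-supported n-vector d (one with all entries positive). -/

import Mathlib

open Finset

abbrev Deck (n : ℕ) := Fin n → ℕ
abbrev Strat (n : ℕ) := Deck n → Fin n → ℝ

/-- Remove one copy of card type `j` from the deck. -/
def Deck.sub {n : ℕ} (d : Deck n) (j : Fin n) : Deck n :=
  fun i => if i = j then d i - 1 else d i

/-- `p` is a probability distribution on `Fin n`. -/
def IsDist {n : ℕ} (p : Fin n → ℝ) : Prop :=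
  (∀ i, 0 ≤ p i) ∧ ∑ i, p i = 1

/-- A Guesser strategy outputs a distribution on card types for each nonzero deck. -/
def IsGuesser {n : ℕ} (G : Strat n) : Prop :=
  ∀ d : Deck n, d ≠ 0 → IsDist (G d)

/-- A Shuffler strategy outputs a distribution supported on the support of the deck. -/
def IsShuffler {n : ℕ} (S : Strat n) : Prop :=
  ∀ d : Deck n, d ≠ 0 → IsDist (S d) ∧ ∀ i, S d i ≠ 0 → d i ≠ 0

/-- Expected score of the game, computed with fuel `N` (the number of cards). -/
def scoreAux {n : ℕ} (G S : Strat n) : ℕ → Deck n → ℝ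
  | 0, _ => 0
  | N + 1, d => ∑ j ∈ Finset.univ.filter (fun j => d j ≠ 0),
      S d j * (G d j + scoreAux G S N (d.sub j))

/-- The expected score `E[C(d,G,S)]`. -/
noncomputable def score {n : ℕ} (G S : Strat n) (d : Deck n) : ℝ :=
  scoreAux G S (∑ i, d i) d

/-- `f(d,S)`: maximum expected score over all Guesser strategies. -/
noncomputable def fval {n : ℕ} (S : Strat n) (d : Deck n) : ℝ :=
  sSup {x | ∃ G, IsGuesser G ∧ score G S d = x}

/-- `F(d,S)`: minimum expected score over all Guesser strategies. -/
noncomputable def Fval {n : ℕ} (S : Strat n) (d : Deck n) : ℝ :=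
  sInf {x | ∃ G, IsGuesser G ∧ score G S d = x}

/-- `f(d) = min_S f(d,S)`. -/
noncomputable def fopt {n : ℕ} (d : Deck n) : ℝ :=
  sInf {x | ∃ S, IsShuffler S ∧ fval S d = x}

/-- `F(d) = max_S F(d,S)`. -/
noncomputable def Fopt {n : ℕ} (d : Deck n) : ℝ :=
  sSup {x | ∃ S, IsShuffler S ∧ Fval S d = x}

/-- The greedy Shuffler strategy: uniform on the support of the deck. -/
noncomputable def greedy {n : ℕ} : Strat n :=
  fun d i => if d i ≠ 0 then ((Finset.univ.filter fun j => d j ≠ 0).card : ℝ)⁻¹ else 0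

/-! Let `V = optScore` vanish on decks missing a card type (the Guesser can then keep naming
that type) and satisfy `V(d) = (1 + ∑ⱼ V(d - δⱼ)) / n` on fully-supported ones; it is the value
of the game against a Shuffler that is uniform on fully-supported decks. The gaps
`bⱼ = V(d) - V(d - δⱼ)` are positive and sum to `1`, so for any Shuffler distribution
`p = S(d)` with minimum `m`, `V(d) - (m + ∑ⱼ pⱼ V(d - δⱼ)) = ∑ⱼ (pⱼ - m) bⱼ ≥ 0`, with equality
only if `p` is uniform. By induction, the Guesser naming a least likely card type therefore
scores at most `V` against every Shuffler, strictly less on a fully-supported deck where `S(d)`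
is not uniform, while a Shuffler uniform on fully-supported decks (such as `greedy`) forces
every Guesser to score at least `V`. -/

namespace Deck

variable {n : ℕ}

lemma ne_zero_iff (d : Deck n) : d ≠ 0 ↔ ∃ i, d i ≠ 0 := by
  simp [Function.ne_iff]

lemma sub_apply_of_ne (d : Deck n) {i j : Fin n} (h : i ≠ j) : d.sub j i = d i := by
  simp [Deck.sub, h]

lemma sub_apply_eq_zero (d : Deck n) {i : Fin n} (j : Fin n) (h : d i = 0) : d.sub j i = 0 := by
  simp [Deck.sub, h]

lemma sub_comm (d : Deck n) (j k : Fin n) : (d.sub j).sub k = (d.sub k).sub j := by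
  funext i
  by_cases hk : i = k <;> by_cases hj : i = j <;> simp [Deck.sub, hk, hj] <;> split <;> omega

lemma sum_sub_add_one (d : Deck n) {j : Fin n} (h : d j ≠ 0) :
    ∑ i, d.sub j i + 1 = ∑ i, d i := by
  rw [← Finset.add_sum_erase _ _ (mem_univ j), ← Finset.add_sum_erase _ _ (mem_univ j),
    Finset.sum_congr rfl fun i hi => d.sub_apply_of_ne (Finset.ne_of_mem_erase hi)]
  simp only [Deck.sub, if_true]
  omega

@[elab_as_elim]
theorem induction_sub {P : Deck n → Prop}
    (step : ∀ d : Deck n, (∀ j, d j ≠ 0 → P (d.sub j)) → P d) (d : Deck n) : P d := by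
  induction h : ∑ i, d i using Nat.strong_induction_on generalizing d with
  | _ N ih =>
    exact step d fun j hj => ih _ (by have := d.sum_sub_add_one hj; omega) _ rfl

end Deck

section

variable {n : ℕ}

lemma score_eq (G S : Strat n) (d : Deck n) :
    score G S d = ∑ j ∈ univ.filter (fun j => d j ≠ 0),
      S d j * (G d j + score G S (d.sub j)) := by
  rcases Nat.eq_zero_or_eq_succ_pred (∑ i, d i) with h | h
  · have hd : ∀ i, d i = 0 := fun i => Finset.sum_eq_zero_iff.mp h i (mem_univ i)
    simp [score, scoreAux, hd]
  · rw [score, h, scoreAux]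
    refine Finset.sum_congr rfl fun j hj => ?_
    have := d.sum_sub_add_one (Finset.mem_filter.mp hj).2
    rw [score, show ∑ i, d.sub j i = (∑ i, d i).pred by omega]

lemma score_zero (G S : Strat n) : score G S 0 = 0 := by
  simp [score, scoreAux]

lemma score_eq_sum_of_isShuffler {G S : Strat n} (hS : IsShuffler S) {d : Deck n} (hd : d ≠ 0) :
    score G S d = ∑ j, S d j * (G d j + score G S (d.sub j)) := by
  rw [score_eq, Finset.sum_filter_of_ne]
  exact fun j _ hj => (hS d hd).2 j (left_ne_zero_of_mul hj)

lemma score_nonneg {G S : Strat n} (hG : IsGuesser G) (hS : IsShuffler S) (d : Deck n) :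
    0 ≤ score G S d := by
  induction d using Deck.induction_sub with
  | step d ih =>
    rw [score_eq]
    refine Finset.sum_nonneg fun j hj => ?_
    have hdj := (Finset.mem_filter.mp hj).2
    have hd : d ≠ 0 := d.ne_zero_iff.mpr ⟨j, hdj⟩
    exact mul_nonneg ((hS d hd).1.1 j) (add_nonneg ((hG d hd).1 j) (ih j hdj))

lemma isDist_single (i : Fin n) : IsDist (Pi.single i 1 : Fin n → ℝ) :=
  ⟨fun j => by by_cases h : j = i <;> simp [h], by simp⟩

noncomputable def minGuesser (S : Strat n) : Strat n := fun d =>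
  if h : ∃ m, ∀ i, S d m ≤ S d i then Pi.single h.choose 1 else 0

lemma minGuesser_spec (S : Strat n) {d : Deck n} (hd : d ≠ 0) :
    ∃ m, (∀ i, S d m ≤ S d i) ∧ minGuesser S d = Pi.single m 1 := by
  obtain ⟨i, -⟩ := d.ne_zero_iff.mp hd
  have : Nonempty (Fin n) := ⟨i⟩
  have h := Finite.exists_min (S d)
  exact ⟨h.choose, h.choose_spec, by simp only [minGuesser, dif_pos h]⟩

lemma isGuesser_minGuesser (S : Strat n) : IsGuesser (minGuesser S) := fun d hd => by
  obtain ⟨m, -, hm⟩ := minGuesser_spec S hd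
  exact hm ▸ isDist_single m

noncomputable def optScoreAux (n : ℕ) : ℕ → Deck n → ℝ
  | 0, _ => 0
  | N + 1, d =>
    if ∀ i, d i ≠ 0 then (n : ℝ)⁻¹ * (1 + ∑ j, optScoreAux n N (d.sub j)) else 0

noncomputable def optScore (d : Deck n) : ℝ := optScoreAux n (∑ i, d i) d

lemma optScore_of_exists_eq_zero {d : Deck n} (h : ∃ i, d i = 0) : optScore d = 0 := by
  rw [optScore]
  cases ∑ i, d i with
  | zero => rfl
  | succ N => simp [optScoreAux, h]

lemma optScore_of_forall_ne_zero {d : Deck n} (h : ∀ i, d i ≠ 0) :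
    optScore d = (n : ℝ)⁻¹ * (1 + ∑ j, optScore (d.sub j)) := by
  rcases Nat.eq_zero_or_eq_succ_pred (∑ i, d i) with ht | ht
  · obtain rfl : n = 0 := by
      by_contra hn
      exact h ⟨0, Nat.pos_of_ne_zero hn⟩ (Finset.sum_eq_zero_iff.mp ht _ (mem_univ _))
    simp [optScore, optScoreAux]
  · rw [optScore, ht, optScoreAux, if_pos h]
    congr 2
    refine Finset.sum_congr rfl fun j _ => ?_
    have := d.sum_sub_add_one (h j)
    rw [optScore, show ∑ i, d.sub j i = (∑ i, d i).pred by omega]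

lemma optScore_zero : optScore (0 : Deck n) = 0 := by
  simp [optScore, optScoreAux]

lemma optScore_nonneg (d : Deck n) : 0 ≤ optScore d := by
  induction d using Deck.induction_sub with
  | step d ih =>
    by_cases h : ∀ i, d i ≠ 0
    · rw [optScore_of_forall_ne_zero h]
      have := Finset.sum_nonneg fun j (_ : j ∈ univ) => ih j (h j)
      positivity
    · exact (optScore_of_exists_eq_zero (by simpa using h)).ge

lemma optScore_sub_le (d : Deck n) (k : Fin n) : optScore (d.sub k) ≤ optScore d := by
  induction d using Deck.induction_sub with
  | step d ih =>
    by_cases h : ∀ i, d i ≠ 0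
    · by_cases hk : ∀ i, d.sub k i ≠ 0
      · rw [optScore_of_forall_ne_zero h, optScore_of_forall_ne_zero hk]
        gcongr with j
        rw [Deck.sub_comm]
        exact ih j (h j)
      · rw [optScore_of_exists_eq_zero (by simpa using hk)]
        exact optScore_nonneg d
    · obtain ⟨i, hi⟩ : ∃ i, d i = 0 := by simpa using h
      rw [optScore_of_exists_eq_zero ⟨i, hi⟩,
        optScore_of_exists_eq_zero ⟨i, d.sub_apply_eq_zero k hi⟩]

lemma optScore_pos {d : Deck n} (h : ∀ i, d i ≠ 0) (hn : n ≠ 0) : 0 < optScore d := by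
  rw [optScore_of_forall_ne_zero h]
  have := Finset.sum_nonneg fun j (_ : j ∈ univ) => optScore_nonneg (d.sub j)
  positivity

lemma optScore_sub_lt {d : Deck n} (h : ∀ i, d i ≠ 0) (k : Fin n) :
    optScore (d.sub k) < optScore d := by
  induction d using Deck.induction_sub with
  | step d ih =>
    by_cases hk : ∀ i, d.sub k i ≠ 0
    · rw [optScore_of_forall_ne_zero h, optScore_of_forall_ne_zero hk]
      have : 0 < (n : ℝ)⁻¹ := by simpa using k.pos
      refine mul_lt_mul_of_pos_left (add_lt_add_right (Finset.sum_lt_sum (fun j _ => ?_)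
        ⟨k, mem_univ k, ih k (h k) hk⟩) 1) this
      rw [Deck.sub_comm]
      exact optScore_sub_le _ k
    · rw [optScore_of_exists_eq_zero (by simpa using hk)]
      exact optScore_pos h k.pos.ne'

section WeightedAverage

variable {ι : Type*} [Fintype ι] {p b : ι → ℝ} {m : ℝ}

lemma le_sum_mul_of_forall_le (hb : ∀ j, 0 ≤ b j) (hb1 : ∑ j, b j = 1) (hm : ∀ j, m ≤ p j) :
    m ≤ ∑ j, p j * b j := by
  have : 0 ≤ ∑ j, (p j - m) * b j :=
    Finset.sum_nonneg fun j _ => mul_nonneg (sub_nonneg.mpr (hm j)) (hb j)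
  simp_rw [sub_mul, Finset.sum_sub_distrib, ← Finset.mul_sum, hb1] at this
  linarith

lemma lt_sum_mul_of_exists_lt (hb : ∀ j, 0 < b j) (hb1 : ∑ j, b j = 1) (hm : ∀ j, m ≤ p j)
    (hlt : ∃ j, m < p j) : m < ∑ j, p j * b j := by
  obtain ⟨k, hk⟩ := hlt
  have : 0 < ∑ j, (p j - m) * b j :=
    Finset.sum_pos' (fun j _ => mul_nonneg (sub_nonneg.mpr (hm j)) (hb j).le)
      ⟨k, mem_univ k, mul_pos (sub_pos.mpr hk) (hb k)⟩
  simp_rw [sub_mul, Finset.sum_sub_distrib, ← Finset.mul_sum, hb1] at this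
  linarith

end WeightedAverage

lemma IsDist.card_ne_zero {p : Fin n → ℝ} (hp : IsDist p) : n ≠ 0 := by
  rintro rfl
  simpa using hp.2

lemma IsDist.exists_lt_of_exists_ne_inv {p : Fin n → ℝ} (hp : IsDist p) {m : ℝ}
    (hm : ∀ j, m ≤ p j) (hne : ∃ i, p i ≠ (n : ℝ)⁻¹) : ∃ j, m < p j := by
  by_contra! hle
  have hconst : ∀ j, p j = m := fun j => le_antisymm (hle j) (hm j)
  have hsum := hp.2
  simp only [hconst, Finset.sum_const, card_univ, Fintype.card_fin, nsmul_eq_mul] at hsum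
  obtain ⟨i, hi⟩ := hne
  exact hi (by rw [hconst i, eq_inv_of_mul_eq_one_right hsum])

lemma sum_optScore_sub_optScore_sub_eq_one {d : Deck n} (h : ∀ i, d i ≠ 0) (hn : n ≠ 0) :
    ∑ j, (optScore d - optScore (d.sub j)) = 1 := by
  have hrec := optScore_of_forall_ne_zero h
  rw [Finset.sum_sub_distrib, Finset.sum_const, card_univ, Fintype.card_fin, nsmul_eq_mul, hrec]
  field_simp
  ring

lemma min_add_sum_optScore_sub_le {d : Deck n} {p : Fin n → ℝ} (hp : IsDist p)
    (hsupp : ∀ i, p i ≠ 0 → d i ≠ 0) {m : ℝ} (hm : ∀ i, m ≤ p i) :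
    m + ∑ j, p j * optScore (d.sub j) ≤ optScore d := by
  by_cases h : ∀ i, d i ≠ 0
  · have := le_sum_mul_of_forall_le (fun j => sub_nonneg.mpr (optScore_sub_le d j))
      (sum_optScore_sub_optScore_sub_eq_one h hp.card_ne_zero) hm
    simp_rw [mul_sub, Finset.sum_sub_distrib, ← Finset.sum_mul, hp.2] at this
    linarith
  · obtain ⟨i, hi⟩ : ∃ i, d i = 0 := by simpa using h
    have hmi : m ≤ 0 := (hm i).trans_eq (by_contra fun hpi => hsupp i hpi hi)
    have : ∑ j, p j * optScore (d.sub j) ≤ ∑ j, p j * optScore d :=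
      Finset.sum_le_sum fun j _ => mul_le_mul_of_nonneg_left (optScore_sub_le d j) (hp.1 j)
    rw [← Finset.sum_mul, hp.2, one_mul] at this
    linarith

lemma min_add_sum_optScore_sub_lt {d : Deck n} (h : ∀ i, d i ≠ 0) {p : Fin n → ℝ}
    (hp : IsDist p) {m : ℝ} (hm : ∀ i, m ≤ p i) (hne : ∃ i, p i ≠ (n : ℝ)⁻¹) :
    m + ∑ j, p j * optScore (d.sub j) < optScore d := by
  have := lt_sum_mul_of_exists_lt (fun j => sub_pos.mpr (optScore_sub_lt h j))
    (sum_optScore_sub_optScore_sub_eq_one h hp.card_ne_zero) hm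
    (hp.exists_lt_of_exists_ne_inv hm hne)
  simp_rw [mul_sub, Finset.sum_sub_distrib, ← Finset.sum_mul, hp.2] at this
  linarith

lemma score_minGuesser_le_of {S : Strat n} (hS : IsShuffler S) {d : Deck n} (hd : d ≠ 0)
    (hsub : ∀ j, d j ≠ 0 → score (minGuesser S) S (d.sub j) ≤ optScore (d.sub j)) :
    ∃ m, (∀ i, m ≤ S d i) ∧
      score (minGuesser S) S d ≤ m + ∑ j, S d j * optScore (d.sub j) := by
  obtain ⟨m, hm, hG⟩ := minGuesser_spec S hd
  refine ⟨S d m, hm, ?_⟩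
  calc score (minGuesser S) S d
      = ∑ j, S d j * (minGuesser S d j + score (minGuesser S) S (d.sub j)) :=
        score_eq_sum_of_isShuffler hS hd
    _ ≤ ∑ j, S d j * (minGuesser S d j + optScore (d.sub j)) := by
        refine Finset.sum_le_sum fun j _ => ?_
        rcases eq_or_ne (S d j) 0 with h0 | h0
        · simp [h0]
        · exact mul_le_mul_of_nonneg_left (add_le_add_right (hsub j ((hS d hd).2 j h0)) _)
            ((hS d hd).1.1 j)
    _ = S d m + ∑ j, S d j * optScore (d.sub j) := by
        simp [hG, mul_add, Finset.sum_add_distrib, Pi.single_apply]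

lemma score_minGuesser_le {S : Strat n} (hS : IsShuffler S) (d : Deck n) :
    score (minGuesser S) S d ≤ optScore d := by
  induction d using Deck.induction_sub with
  | step d ih =>
    rcases eq_or_ne d 0 with rfl | hd
    · exact (score_zero _ _).trans_le (optScore_nonneg 0)
    obtain ⟨m, hm, hscore⟩ := score_minGuesser_le_of hS hd ih
    exact hscore.trans (min_add_sum_optScore_sub_le (hS d hd).1 ((hS d hd).2) hm)

lemma bddBelow_scores {S : Strat n} (hS : IsShuffler S) (d : Deck n) :
    BddBelow {x | ∃ G, IsGuesser G ∧ score G S d = x} :=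
  ⟨0, fun _ ⟨_, hG, hx⟩ => hx ▸ score_nonneg hG hS d⟩

lemma Fval_le_score {S : Strat n} (hS : IsShuffler S) {G : Strat n} (hG : IsGuesser G)
    (d : Deck n) : Fval S d ≤ score G S d :=
  csInf_le (bddBelow_scores hS d) ⟨G, hG, rfl⟩

lemma Fval_le_optScore {S : Strat n} (hS : IsShuffler S) (d : Deck n) :
    Fval S d ≤ optScore d :=
  (Fval_le_score hS (isGuesser_minGuesser S) d).trans (score_minGuesser_le hS d)

lemma Fval_lt_optScore {S : Strat n} (hS : IsShuffler S) {d : Deck n} (h : ∀ i, d i ≠ 0)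
    (hne : ∃ i, S d i ≠ (n : ℝ)⁻¹) : Fval S d < optScore d := by
  have hd : d ≠ 0 := d.ne_zero_iff.mpr (hne.imp fun i _ => h i)
  obtain ⟨m, hm, hscore⟩ :=
    score_minGuesser_le_of hS hd fun j _ => score_minGuesser_le hS (d.sub j)
  calc Fval S d ≤ score (minGuesser S) S d := Fval_le_score hS (isGuesser_minGuesser S) d
    _ ≤ m + ∑ j, S d j * optScore (d.sub j) := hscore
    _ < optScore d := min_add_sum_optScore_sub_lt h (hS d hd).1 hm hne

lemma optScore_le_score {S : Strat n} (hS : IsShuffler S)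
    (hU : ∀ d : Deck n, (∀ i, d i ≠ 0) → ∀ i, S d i = (n : ℝ)⁻¹) {G : Strat n} (hG : IsGuesser G)
    (d : Deck n) : optScore d ≤ score G S d := by
  induction d using Deck.induction_sub with
  | step d ih =>
    rcases eq_or_ne d 0 with rfl | hd
    · rw [optScore_zero, score_zero]
    by_cases h : ∀ i, d i ≠ 0
    · rw [optScore_of_forall_ne_zero h, score_eq_sum_of_isShuffler hS hd]
      simp_rw [hU d h, ← Finset.mul_sum, Finset.sum_add_distrib, (hG d hd).2]
      gcongr with j
      exact ih j (h j)
    · rw [optScore_of_exists_eq_zero (by simpa using h)]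
      exact score_nonneg hG hS d

lemma Fval_eq_optScore {S : Strat n} (hS : IsShuffler S)
    (hU : ∀ d : Deck n, (∀ i, d i ≠ 0) → ∀ i, S d i = (n : ℝ)⁻¹) (d : Deck n) :
    Fval S d = optScore d :=
  (Fval_le_optScore hS d).antisymm <|
    le_csInf ⟨_, minGuesser S, isGuesser_minGuesser S, rfl⟩
      fun _ ⟨_, hG, hx⟩ => hx ▸ optScore_le_score hS hU hG d

lemma isShuffler_greedy : IsShuffler (greedy : Strat n) := by
  intro d hd
  have hpos : (0 : ℝ) < (univ.filter fun j => d j ≠ 0).card := by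
    obtain ⟨i, hi⟩ := d.ne_zero_iff.mp hd
    exact_mod_cast Finset.card_pos.mpr ⟨i, Finset.mem_filter.mpr ⟨mem_univ i, hi⟩⟩
  refine ⟨⟨fun i => ?_, ?_⟩, fun i hi h0 => hi (by simp [greedy, h0])⟩
  · unfold greedy
    split <;> positivity
  · simp only [greedy]
    rw [← Finset.sum_filter, Finset.sum_const, nsmul_eq_mul, mul_inv_cancel₀ hpos.ne']

lemma greedy_of_forall_ne_zero {d : Deck n} (h : ∀ i, d i ≠ 0) (i : Fin n) :
    (greedy : Strat n) d i = (n : ℝ)⁻¹ := by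
  simp only [greedy]
  rw [if_pos (h i), Finset.filter_true_of_mem fun j _ => h j, card_univ, Fintype.card_fin]

lemma Fopt_eq_optScore (d : Deck n) : Fopt d = optScore d := by
  have hmem : optScore d ∈ {x | ∃ S, IsShuffler S ∧ Fval S d = x} :=
    ⟨greedy, isShuffler_greedy,
      Fval_eq_optScore isShuffler_greedy (fun _ => greedy_of_forall_ne_zero) d⟩
  have hub : optScore d ∈ upperBounds {x | ∃ S, IsShuffler S ∧ Fval S d = x} :=
    fun _ ⟨_, hS, hx⟩ => hx ▸ Fval_le_optScore hS d
  exact (csSup_le ⟨_, hmem⟩ hub).antisymm (le_csSup ⟨_, hub⟩ hmem)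

end

/-- a Shuffler strategy is a maximizing Shuffler strategy iff it is uniform
on `[n]` on every fully-supported deck. -/
theorem stmt8 (S : ∀ n, Strat n) (hS : ∀ n, IsShuffler (S n)) :
    (∀ (n : ℕ) (d : Deck n), d ≠ 0 → Fval (S n) d = Fopt d) ↔
      (∀ (n : ℕ) (d : Deck n), (∀ i, d i ≠ 0) → ∀ i, S n d i = (n : ℝ)⁻¹) := by
  constructor
  · intro hmax n d h i
    by_contra hne
    have hd : d ≠ 0 := d.ne_zero_iff.mpr ⟨i, h i⟩
    exact (Fval_lt_optScore (hS n) h ⟨i, hne⟩).ne (by rw [hmax n d hd, Fopt_eq_optScore])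
  · intro hU n d _
    rw [Fval_eq_optScore (hS n) (hU n), Fopt_eq_optScore]
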